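/- (Corollary 3.3.1 and Theorem 1.1 C) Let p ∈ [1, ∞] and f ∈ L_p(ℝ). The function y(x) = (Gf)(x) is continuously differentiable with locally absolutely continuous first derivative, is bounded on ℝ, and satisfies −y''(x) + q(x)y(x) = f(x) for almost every x ∈ ℝ; moreover y is the unique solution of this equation in the class of bounded continuously differentiable functions with locally absolutely continuous first derivative. -/

import Mathlib

open MeasureTheory Filter Real Set
open scoped ENNReal

noncomputable section

/-- Condition (1.5): for every `a > 0`, `∫_{x-a}^{x+a} q(t) dt → ∞` as `|x| → ∞`. -/
def Cond15 (q : ℝ → ℝ) : Prop :=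
  ∀ a : ℝ, 0 < a → Tendsto (fun x => ∫ t in (x - a)..(x + a), q t) (cocompact ℝ) atTop

/-- `(u, v)` is a principal fundamental system of solutions (PFSS) of `z'' = q z`.
Local absolute continuity of `u'` together with `u'' = q u` a.e. is encoded via the
fundamental theorem of calculus: `u' b - u' a = ∫_a^b q t * u t dt` for all `a, b`. -/
def IsPFSS (q u v : ℝ → ℝ) : Prop :=
  ContDiff ℝ 1 u ∧ ContDiff ℝ 1 v ∧
  (∀ a b : ℝ, deriv u b - deriv u a = ∫ t in a..b, q t * u t) ∧
  (∀ a b : ℝ, deriv v b - deriv v a = ∫ t in a..b, q t * v t) ∧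
  (∀ x, 0 < u x) ∧ (∀ x, 0 < v x) ∧
  (∀ x, deriv u x < 0) ∧ (∀ x, 0 < deriv v x) ∧
  (∀ x, deriv v x * u x - deriv u x * v x = 1) ∧
  (∀ x, u x = v x * ∫ t in Set.Ioi x, ((v t) ^ 2)⁻¹) ∧
  Tendsto u atTop (nhds 0) ∧ Tendsto (deriv u) atTop (nhds 0) ∧
  Tendsto v atTop atTop ∧ Tendsto (deriv v) atTop atTop ∧
  Tendsto v atBot (nhds 0) ∧ Tendsto (deriv v) atBot (nhds 0) ∧
  Tendsto u atBot atTop ∧ Tendsto (fun x => |deriv u x|) atBot atTop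

/-- The Green function: `G(x,t) = u(x) v(t)` for `x ≥ t`, `G(x,t) = u(t) v(x)` for `x ≤ t`. -/
def GreenFn (u v : ℝ → ℝ) (x t : ℝ) : ℝ := if x ≤ t then u t * v x else u x * v t

/-- The Green operator `(Gf)(x) = ∫_ℝ G(x,t) f(t) dt`. -/
def GreenOp (u v f : ℝ → ℝ) (x : ℝ) : ℝ := ∫ t, GreenFn u v x t * f t

/-!
The kernel satisfies `0 ≤ G(x, ·) ≤ u(x) v(x) ≤ 1` and
`∫ G(x, t) dt ≤ u(x) v'(x) - u'(x) v(x) = 1`: the first because the energy `v'² - v²` is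
nondecreasing (its derivative is `2 (q - 1) v v' ≥ 0`) and vanishes at `-∞`, the second because
`v ≤ q v = v''` and `u ≤ u''`. Hence `‖G(x, ·)‖_{p'} ≤ 1` for every `p'`, and Hölder's
inequality gives `|Gf| ≤ ‖f‖_p`.

Splitting the integral at `x` gives `Gf = u A + v B` with `A x = ∫_{-∞}^x v f` and
`B x = ∫_x^∞ u f`. The product rule for absolutely continuous functions gives
`(Gf)' = u' A + v' B`, a continuous function, and then
`(Gf)'' = q Gf - (v' u - u' v) f = q Gf - f`.

The difference `w` of two bounded solutions solves `w'' = q w`, so its Wronskians with `u` and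
`v` are constant and `w = a u + b v`. Since `w / v → 0` while `u / v → 0` at `+∞`, `b = 0`;
since `w / u → 0` at `-∞`, `a = 0`.
-/

open intervalIntegral
open scoped Topology

namespace MeasureTheory.LocallyIntegrable

lemma intervalIntegrable {E : Type*} [NormedAddCommGroup E] {μ : Measure ℝ} {f : ℝ → E}
    (hf : LocallyIntegrable f μ) (a b : ℝ) : IntervalIntegrable f μ a b :=
  (hf.integrableOn_isCompact isCompact_uIcc).intervalIntegrable

end MeasureTheory.LocallyIntegrable

def IsPrimitive (F f : ℝ → ℝ) : Prop := ∀ a b, F b - F a = ∫ t in a..b, f t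

lemma isPrimitive_deriv {F : ℝ → ℝ} (hF : ContDiff ℝ 1 F) : IsPrimitive F (deriv F) :=
  fun a b =>
  (integral_deriv_eq_sub (fun x _ => hF.differentiable one_ne_zero x)
    ((hF.continuous_deriv le_rfl).intervalIntegrable a b)).symm

namespace IsPrimitive

variable {F G f g : ℝ → ℝ}

lemma eq_add_integral (hF : IsPrimitive F f) (a x : ℝ) : F x = F a + ∫ t in a..x, f t :=
  sub_eq_iff_eq_add'.mp (hF a x)

lemma congr (hF : IsPrimitive F f) (h : ∀ t, f t = g t) : IsPrimitive F g := by
  rwa [← funext h]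

lemma add (hF : IsPrimitive F f) (hG : IsPrimitive G g) (hf : LocallyIntegrable f)
    (hg : LocallyIntegrable g) : IsPrimitive (fun x => F x + G x) fun t => f t + g t :=
    fun a b => by
  rw [integral_add (hf.intervalIntegrable a b) (hg.intervalIntegrable a b), ← hF, ← hG]
  ring

lemma sub (hF : IsPrimitive F f) (hG : IsPrimitive G g) (hf : LocallyIntegrable f)
    (hg : LocallyIntegrable g) : IsPrimitive (fun x => F x - G x) fun t => f t - g t :=
    fun a b => by
  rw [integral_sub (hf.intervalIntegrable a b) (hg.intervalIntegrable a b), ← hF, ← hG]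
  ring

lemma monotone (hF : IsPrimitive F f) (hf : ∀ t, 0 ≤ f t) : Monotone F := fun a b hab =>
  sub_nonneg.mp <| (hF a b).symm ▸ integral_nonneg hab fun t _ => hf t

lemma continuous (hF : IsPrimitive F f) (hf : LocallyIntegrable f) : Continuous F := by
  rw [funext (hF.eq_add_integral 0)]
  exact continuous_const.add (continuous_primitive hf.intervalIntegrable 0)

lemma hasDerivAt (hF : IsPrimitive F f) (hf : Continuous f) (x : ℝ) : HasDerivAt F (f x) x := by
  rw [funext (hF.eq_add_integral 0)]
  exact (hf.integral_hasStrictDerivAt 0 x).hasDerivAt.const_add _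

lemma ae_hasDerivAt (hF : IsPrimitive F f) (hf : LocallyIntegrable f) :
    ∀ᵐ x, HasDerivAt F (f x) x := by
  filter_upwards [LocallyIntegrable.ae_hasDerivAt_integral hf] with x hx
  rw [funext (hF.eq_add_integral 0)]
  exact (hx 0).const_add _

lemma absolutelyContinuousOnInterval (hF : IsPrimitive F f) (hf : LocallyIntegrable f)
    (a b : ℝ) : AbsolutelyContinuousOnInterval F a b := by
  rw [funext (hF.eq_add_integral a)]
  exact (LipschitzWith.const (F a)).lipschitzOnWith.absolutelyContinuousOnInterval.fun_add
    ((hf.intervalIntegrable a b).absolutelyContinuousOnInterval_intervalIntegral left_mem_uIcc)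

lemma mul (hF : IsPrimitive F f) (hG : IsPrimitive G g) (hf : LocallyIntegrable f)
    (hg : LocallyIntegrable g) :
    IsPrimitive (fun x => F x * G x) (fun t => F t * g t + f t * G t) := fun a b => by
  rw [← (hF.absolutelyContinuousOnInterval hf a b).integral_deriv_mul_eq_sub
    (hG.absolutelyContinuousOnInterval hg a b)]
  refine integral_congr_ae ?_
  filter_upwards [hF.ae_hasDerivAt hf, hG.ae_hasDerivAt hg] with x hFx hGx _
  rw [hFx.deriv, hGx.deriv]
  ring

end IsPrimitive

section SecondOrder

variable {q y w : ℝ → ℝ}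

lemma wronskian_eq (hq : LocallyIntegrable q) (hy : ContDiff ℝ 1 y)
    (hy' : IsPrimitive (deriv y) fun t => q t * y t) (hw : ContDiff ℝ 1 w)
    (hw' : IsPrimitive (deriv w) fun t => q t * w t) (a b : ℝ) :
    deriv y b * w b - y b * deriv w b = deriv y a * w a - y a * deriv w a := by
  have hw'c := hw.continuous_deriv le_rfl
  have h₁ := hy'.mul (isPrimitive_deriv hw) (hq.mul_continuous hy.continuous)
    hw'c.locallyIntegrable a b
  have h₂ := (isPrimitive_deriv hy).mul hw' (hy.continuous_deriv le_rfl).locallyIntegrable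
    (hq.mul_continuous hw.continuous) a b
  have h : ∫ t in a..b, (y t * (q t * w t) + deriv y t * deriv w t) =
      ∫ t in a..b, (deriv y t * deriv w t + q t * y t * w t) :=
    integral_congr fun t _ => by ring
  linarith

lemma isPrimitive_sq_deriv_sub_sq (hq : LocallyIntegrable q) (hy : ContDiff ℝ 1 y)
    (hy' : IsPrimitive (deriv y) fun t => q t * y t) :
    IsPrimitive (fun x => deriv y x ^ 2 - y x ^ 2)
      (fun t => 2 * (q t - 1) * (y t * deriv y t)) := fun a b => by
  have hy'c := hy.continuous_deriv le_rfl
  have hqy := hq.mul_continuous hy.continuous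
  have h₁ := hy'.mul hy' hqy hqy a b
  have h₂ := (isPrimitive_deriv hy).mul (isPrimitive_deriv hy) hy'c.locallyIntegrable
    hy'c.locallyIntegrable a b
  have hi₁ : IntervalIntegrable (fun t => deriv y t * (q t * y t) + q t * y t * deriv y t)
      volume a b := ((hqy.continuous_mul hy'c).add (hqy.mul_continuous hy'c)).intervalIntegrable a b
  have hi₂ : IntervalIntegrable (fun t => y t * deriv y t + deriv y t * y t) volume a b :=
    ((hy.continuous.mul hy'c).add (hy'c.mul hy.continuous)).intervalIntegrable a b
  rw [integral_congr (g := fun t => (deriv y t * (q t * y t) + q t * y t * deriv y t) -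
      (y t * deriv y t + deriv y t * y t)) fun t _ => by ring,
    integral_sub hi₁ hi₂, ← h₁, ← h₂]
  ring

lemma isPrimitive_deriv_sub {f z : ℝ → ℝ} (hq : LocallyIntegrable q)
    (hf : LocallyIntegrable f) (hy : ContDiff ℝ 1 y) (hz : ContDiff ℝ 1 z)
    (hy' : IsPrimitive (deriv y) fun t => q t * y t - f t)
    (hz' : IsPrimitive (deriv z) fun t => q t * z t - f t) :
    IsPrimitive (deriv (y - z)) fun t => q t * (y - z) t := by
  rw [show deriv (y - z) = fun x => deriv y x - deriv z x from
    funext fun x => deriv_sub (hy.differentiable one_ne_zero x) (hz.differentiable one_ne_zero x)]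
  exact (hy'.sub hz' ((hq.mul_continuous hy.continuous).sub hf)
    ((hq.mul_continuous hz.continuous).sub hf)).congr fun t => by simp only [Pi.sub_apply]; ring

end SecondOrder

lemma integrableOn_Iic_and_integral_le {g : ℝ → ℝ} {x C : ℝ} (hg : LocallyIntegrable g)
    (hg₀ : ∀ t, 0 ≤ g t) (hC : ∀ a ≤ x, ∫ t in a..x, g t ≤ C) :
    IntegrableOn g (Iic x) ∧ ∫ t in Iic x, g t ≤ C := by
  have hint : IntegrableOn g (Iic x) :=
    integrableOn_Iic_of_intervalIntegral_norm_bounded C x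
      (fun a => (hg.integrableOn_isCompact isCompact_Icc).mono_set Ioc_subset_Icc_self) tendsto_id
      (by filter_upwards [eventually_le_atBot x] with a ha
          simpa only [id, Real.norm_of_nonneg (hg₀ _)] using hC a ha)
  refine ⟨hint, le_of_tendsto (intervalIntegral_tendsto_integral_Iic x hint tendsto_id) ?_⟩
  filter_upwards [eventually_le_atBot x] with a ha using hC a ha

lemma integrableOn_Ioi_and_integral_le {g : ℝ → ℝ} {x C : ℝ} (hg : LocallyIntegrable g)
    (hg₀ : ∀ t, 0 ≤ g t) (hC : ∀ b ≥ x, ∫ t in x..b, g t ≤ C) :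
    IntegrableOn g (Ioi x) ∧ ∫ t in Ioi x, g t ≤ C := by
  have hint : IntegrableOn g (Ioi x) :=
    integrableOn_Ioi_of_intervalIntegral_norm_bounded C x
      (fun b => (hg.integrableOn_isCompact isCompact_Icc).mono_set Ioc_subset_Icc_self) tendsto_id
      (by filter_upwards [eventually_ge_atTop x] with b hb
          simpa only [id, Real.norm_of_nonneg (hg₀ _)] using hC b hb)
  refine ⟨hint, le_of_tendsto (intervalIntegral_tendsto_integral_Ioi x hint tendsto_id) ?_⟩
  filter_upwards [eventually_ge_atTop x] with b hb using hC b hb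

lemma eLpNorm_le_one_of_norm_le_one {α E : Type*} [MeasurableSpace α] [NormedAddCommGroup E]
    {μ : Measure α} {k : α → E} {r : ℝ≥0∞} (hr : 1 ≤ r) (hk : ∀ t, ‖k t‖ ≤ 1)
    (hk₁ : ∫⁻ t, ‖k t‖ₑ ∂μ ≤ 1) : eLpNorm k r μ ≤ 1 := by
  have hk' : ∀ t, ‖k t‖ₑ ≤ 1 := fun t => by
    rw [← ofReal_norm]
    exact ENNReal.ofReal_le_one.mpr (hk t)
  rcases eq_or_ne r ∞ with rfl | hr_top
  · exact eLpNormEssSup_le_of_ae_bound (C := 1) (ae_of_all _ hk) |>.trans (by simp)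
  have hr₁ : 1 ≤ r.toReal := by simpa using ENNReal.toReal_mono hr_top hr
  rw [eLpNorm_eq_lintegral_rpow_enorm_toReal (by positivity) hr_top]
  refine ENNReal.rpow_le_one ((lintegral_mono fun t => ?_).trans hk₁) (by positivity)
  simpa using ENNReal.rpow_le_rpow_of_exponent_ge (hk' t) hr₁

lemma integrable_mul_and_norm_integral_le_eLpNorm {α : Type*} [MeasurableSpace α]
    {μ : Measure α} {k f : α → ℝ} {p : ℝ≥0∞} (hp : 1 ≤ p) (hf : MemLp f p μ)
    (hk : AEStronglyMeasurable k μ) (hk₁ : ∀ r, 1 ≤ r → eLpNorm k r μ ≤ 1) :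
    Integrable (fun t => k t * f t) μ ∧
      ‖∫ t, k t * f t ∂μ‖ ≤ (eLpNorm f p μ).toReal := by
  set p' : ℝ≥0∞ := (1 - p⁻¹)⁻¹
  have : ENNReal.HolderConjugate p' p := ENNReal.holderConjugate_iff.mpr <| by
    rw [inv_inv, tsub_add_cancel_of_le (ENNReal.inv_le_one.mpr hp)]
  have hkf : eLpNorm (fun t => k t * f t) 1 μ ≤ eLpNorm f p μ :=
    (eLpNorm_smul_le_mul_eLpNorm (p := p') hf.1 hk).trans <| by
      simpa using mul_le_mul_left (hk₁ p' (ENNReal.one_le_inv.mpr tsub_le_self)) (eLpNorm f p μ)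
  have hint : Integrable (fun t => k t * f t) μ :=
    memLp_one_iff_integrable.mp ⟨hk.mul hf.1, hkf.trans_lt hf.2⟩
  refine ⟨hint, (MeasureTheory.norm_integral_le_integral_norm _).trans ?_⟩
  rw [integral_norm_eq_lintegral_enorm hint.1, ← eLpNorm_one_eq_lintegral_enorm]
  exact ENNReal.toReal_mono hf.2.ne hkf

lemma greenFn_of_le {u v : ℝ → ℝ} (x t : ℝ) (ht : t ≤ x) :
    GreenFn u v x t = u x * v t := by
  unfold GreenFn
  split_ifs with h
  · rw [le_antisymm ht h]
  · rfl

lemma greenFn_of_lt {u v : ℝ → ℝ} (x t : ℝ) (ht : x < t) : GreenFn u v x t = v x * u t := by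
  rw [GreenFn, if_pos ht.le, mul_comm]

lemma continuous_greenFn {u v : ℝ → ℝ} (hu : Continuous u) (hv : Continuous v) (x : ℝ) :
    Continuous (GreenFn u v x) :=
  Continuous.if_le (hu.mul continuous_const) (continuous_const.mul hv) continuous_const
    continuous_id fun t ht => by rw [ht]

def greenCoeffU (v f : ℝ → ℝ) (x : ℝ) : ℝ := ∫ t in Iic x, v t * f t

def greenCoeffV (u f : ℝ → ℝ) (x : ℝ) : ℝ := ∫ t in Ioi x, u t * f t

lemma greenOp_eq {u v f : ℝ → ℝ} (hGf : ∀ x, Integrable fun t => GreenFn u v x t * f t)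
    (x : ℝ) : GreenOp u v f x = u x * greenCoeffU v f x + v x * greenCoeffV u f x := by
  rw [GreenOp, ← integral_Iic_add_Ioi (hGf x).integrableOn (hGf x).integrableOn,
    setIntegral_congr_fun measurableSet_Iic fun t ht => by rw [greenFn_of_le x t ht, mul_assoc],
    setIntegral_congr_fun measurableSet_Ioi fun t ht => by rw [greenFn_of_lt x t ht, mul_assoc],
    MeasureTheory.integral_const_mul, MeasureTheory.integral_const_mul, greenCoeffU, greenCoeffV]

namespace IsPFSS

variable {q u v f w : ℝ → ℝ}

lemma contDiff_u (huv : IsPFSS q u v) : ContDiff ℝ 1 u := huv.1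
lemma contDiff_v (huv : IsPFSS q u v) : ContDiff ℝ 1 v := huv.2.1
lemma isPrimitive_deriv_u (huv : IsPFSS q u v) : IsPrimitive (deriv u) fun t => q t * u t :=
  huv.2.2.1
lemma isPrimitive_deriv_v (huv : IsPFSS q u v) : IsPrimitive (deriv v) fun t => q t * v t :=
  huv.2.2.2.1
lemma u_pos (huv : IsPFSS q u v) : ∀ x, 0 < u x := huv.2.2.2.2.1
lemma v_pos (huv : IsPFSS q u v) : ∀ x, 0 < v x := huv.2.2.2.2.2.1
lemma deriv_u_neg (huv : IsPFSS q u v) : ∀ x, deriv u x < 0 := huv.2.2.2.2.2.2.1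
lemma deriv_v_pos (huv : IsPFSS q u v) : ∀ x, 0 < deriv v x := huv.2.2.2.2.2.2.2.1
lemma wronskian (huv : IsPFSS q u v) : ∀ x, deriv v x * u x - deriv u x * v x = 1 :=
  huv.2.2.2.2.2.2.2.2.1
lemma tendsto_u_atTop (huv : IsPFSS q u v) : Tendsto u atTop (𝓝 0) := huv.2.2.2.2.2.2.2.2.2.2.1
lemma tendsto_v_atTop (huv : IsPFSS q u v) : Tendsto v atTop atTop := huv.2.2.2.2.2.2.2.2.2.2.2.2.1
lemma tendsto_v_atBot (huv : IsPFSS q u v) : Tendsto v atBot (𝓝 0) :=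
  huv.2.2.2.2.2.2.2.2.2.2.2.2.2.2.1
lemma tendsto_deriv_v_atBot (huv : IsPFSS q u v) : Tendsto (deriv v) atBot (𝓝 0) :=
  huv.2.2.2.2.2.2.2.2.2.2.2.2.2.2.2.1
lemma tendsto_u_atBot (huv : IsPFSS q u v) : Tendsto u atBot atTop :=
  huv.2.2.2.2.2.2.2.2.2.2.2.2.2.2.2.2.1

lemma v_le_deriv_v (hq_loc : LocallyIntegrable q) (hq : ∀ x, 1 ≤ q x) (huv : IsPFSS q u v)
    (x : ℝ) : v x ≤ deriv v x := by
  have hmono := (isPrimitive_sq_deriv_sub_sq hq_loc huv.contDiff_v huv.isPrimitive_deriv_v).monotone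
    fun t => mul_nonneg (by linarith [hq t]) (mul_pos (huv.v_pos t) (huv.deriv_v_pos t)).le
  have hlim : Tendsto (fun x => deriv v x ^ 2 - v x ^ 2) atBot (𝓝 0) := by
    simpa using (huv.tendsto_deriv_v_atBot.pow 2).sub (huv.tendsto_v_atBot.pow 2)
  exact (sq_le_sq₀ (huv.v_pos x).le (huv.deriv_v_pos x).le).mp
    (sub_nonneg.mp (hmono.le_of_tendsto hlim x))

lemma mul_le_one (hq_loc : LocallyIntegrable q) (hq : ∀ x, 1 ≤ q x) (huv : IsPFSS q u v)
    (x : ℝ) : u x * v x ≤ 1 := by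
  have := mul_le_mul_of_nonneg_left (huv.v_le_deriv_v hq_loc hq x) (huv.u_pos x).le
  nlinarith [huv.wronskian x, huv.deriv_u_neg x, huv.v_pos x]

lemma greenFn_nonneg (huv : IsPFSS q u v) (x t : ℝ) : 0 ≤ GreenFn u v x t := by
  unfold GreenFn
  split_ifs
  exacts [(mul_pos (huv.u_pos t) (huv.v_pos x)).le, (mul_pos (huv.u_pos x) (huv.v_pos t)).le]

lemma greenFn_le_one (hq_loc : LocallyIntegrable q) (hq : ∀ x, 1 ≤ q x) (huv : IsPFSS q u v)
    (x t : ℝ) : GreenFn u v x t ≤ 1 := by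
  refine le_trans ?_ (huv.mul_le_one hq_loc hq x)
  unfold GreenFn
  split_ifs with h
  · exact mul_le_mul_of_nonneg_right ((strictAnti_of_deriv_neg huv.deriv_u_neg).antitone h)
      (huv.v_pos x).le
  · exact mul_le_mul_of_nonneg_left ((strictMono_of_deriv_pos huv.deriv_v_pos).monotone
      (not_le.mp h).le) (huv.u_pos x).le

lemma integrableOn_v_Iic_and_integral_le (hq_loc : LocallyIntegrable q) (hq : ∀ x, 1 ≤ q x)
    (huv : IsPFSS q u v) (x : ℝ) :
    IntegrableOn v (Iic x) ∧ ∫ t in Iic x, v t ≤ deriv v x := by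
  have hv := huv.contDiff_v.continuous
  refine integrableOn_Iic_and_integral_le hv.locallyIntegrable (fun t => (huv.v_pos t).le)
    fun a ha => ?_
  calc ∫ t in a..x, v t ≤ ∫ t in a..x, q t * v t :=
        integral_mono_on ha (hv.intervalIntegrable a x)
          ((hq_loc.mul_continuous hv).intervalIntegrable a x)
          fun t _ => le_mul_of_one_le_left (huv.v_pos t).le (hq t)
    _ = deriv v x - deriv v a := (huv.isPrimitive_deriv_v a x).symm
    _ ≤ deriv v x := sub_le_self _ (huv.deriv_v_pos a).le

lemma integrableOn_u_Ioi_and_integral_le (hq_loc : LocallyIntegrable q) (hq : ∀ x, 1 ≤ q x)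
    (huv : IsPFSS q u v) (x : ℝ) :
    IntegrableOn u (Ioi x) ∧ ∫ t in Ioi x, u t ≤ -deriv u x := by
  have hu := huv.contDiff_u.continuous
  refine integrableOn_Ioi_and_integral_le hu.locallyIntegrable (fun t => (huv.u_pos t).le)
    fun b hb => ?_
  calc ∫ t in x..b, u t ≤ ∫ t in x..b, q t * u t :=
        integral_mono_on hb (hu.intervalIntegrable x b)
          ((hq_loc.mul_continuous hu).intervalIntegrable x b)
          fun t _ => le_mul_of_one_le_left (huv.u_pos t).le (hq t)
    _ = deriv u b - deriv u x := (huv.isPrimitive_deriv_u x b).symm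
    _ ≤ -deriv u x := by linarith [huv.deriv_u_neg b]

lemma integrable_greenFn_and_integral_le_one (hq_loc : LocallyIntegrable q) (hq : ∀ x, 1 ≤ q x)
    (huv : IsPFSS q u v) (x : ℝ) :
    Integrable (GreenFn u v x) ∧ ∫ t, GreenFn u v x t ≤ 1 := by
  obtain ⟨hv_int, hv_le⟩ := huv.integrableOn_v_Iic_and_integral_le hq_loc hq x
  obtain ⟨hu_int, hu_le⟩ := huv.integrableOn_u_Ioi_and_integral_le hq_loc hq x
  have hIic : EqOn (GreenFn u v x) (fun t => u x * v t) (Iic x) := greenFn_of_le x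
  have hIoi : EqOn (GreenFn u v x) (fun t => v x * u t) (Ioi x) := greenFn_of_lt x
  have hint_Iic : IntegrableOn (GreenFn u v x) (Iic x) :=
    IntegrableOn.congr_fun (hv_int.const_mul (u x)) hIic.symm measurableSet_Iic
  have hint_Ioi : IntegrableOn (GreenFn u v x) (Ioi x) :=
    IntegrableOn.congr_fun (hu_int.const_mul (v x)) hIoi.symm measurableSet_Ioi
  refine ⟨integrableOn_univ.mp (Iic_union_Ioi (a := x) ▸ hint_Iic.union hint_Ioi), ?_⟩
  rw [← integral_Iic_add_Ioi hint_Iic hint_Ioi, setIntegral_congr_fun measurableSet_Iic hIic,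
    setIntegral_congr_fun measurableSet_Ioi hIoi, MeasureTheory.integral_const_mul,
    MeasureTheory.integral_const_mul]
  calc _ ≤ u x * deriv v x + v x * -deriv u x := by
        gcongr
        exacts [(huv.u_pos x).le, (huv.v_pos x).le]
    _ = 1 := by linarith [huv.wronskian x]

lemma eLpNorm_greenFn_le_one (hq_loc : LocallyIntegrable q) (hq : ∀ x, 1 ≤ q x)
    (huv : IsPFSS q u v) (x : ℝ) {r : ℝ≥0∞} (hr : 1 ≤ r) :
    eLpNorm (GreenFn u v x) r volume ≤ 1 := by
  obtain ⟨hint, hle⟩ := huv.integrable_greenFn_and_integral_le_one hq_loc hq x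
  refine eLpNorm_le_one_of_norm_le_one hr (fun t => ?_) ?_
  · rw [Real.norm_of_nonneg (huv.greenFn_nonneg x t)]
    exact huv.greenFn_le_one hq_loc hq x t
  · rw [← ofReal_integral_norm_eq_lintegral_enorm hint]
    refine ENNReal.ofReal_le_one.mpr ?_
    simpa only [Real.norm_of_nonneg (huv.greenFn_nonneg x _)] using hle

lemma integrable_greenFn_mul_and_abs_greenOp_le (hq_loc : LocallyIntegrable q)
    (hq : ∀ x, 1 ≤ q x) (huv : IsPFSS q u v) {p : ℝ≥0∞} (hp : 1 ≤ p) (hf : MemLp f p)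
    (x : ℝ) :
    Integrable (fun t => GreenFn u v x t * f t) ∧ |GreenOp u v f x| ≤ (eLpNorm f p).toReal :=
  integrable_mul_and_norm_integral_le_eLpNorm hp hf
    (continuous_greenFn huv.contDiff_u.continuous huv.contDiff_v.continuous x).aestronglyMeasurable
    fun _ hr => huv.eLpNorm_greenFn_le_one hq_loc hq x hr

lemma integrableOn_v_mul_Iic (huv : IsPFSS q u v)
    (hGf : ∀ x, Integrable fun t => GreenFn u v x t * f t) (x : ℝ) :
    IntegrableOn (fun t => v t * f t) (Iic x) := by
  refine IntegrableOn.congr_fun ((hGf x).integrableOn.const_mul (u x)⁻¹) (fun t ht => ?_)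
    measurableSet_Iic
  rw [greenFn_of_le x t ht]
  field_simp [(huv.u_pos x).ne']

lemma integrableOn_u_mul_Ioi (huv : IsPFSS q u v)
    (hGf : ∀ x, Integrable fun t => GreenFn u v x t * f t) (x : ℝ) :
    IntegrableOn (fun t => u t * f t) (Ioi x) := by
  refine IntegrableOn.congr_fun ((hGf x).integrableOn.const_mul (v x)⁻¹) (fun t ht => ?_)
    measurableSet_Ioi
  rw [greenFn_of_lt x t ht]
  field_simp [(huv.v_pos x).ne']

lemma isPrimitive_greenCoeffU (huv : IsPFSS q u v)
    (hGf : ∀ x, Integrable fun t => GreenFn u v x t * f t) :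
    IsPrimitive (greenCoeffU v f) fun t => v t * f t := fun a b =>
  integral_Iic_sub_Iic (huv.integrableOn_v_mul_Iic hGf a) (huv.integrableOn_v_mul_Iic hGf b)

lemma isPrimitive_greenCoeffV (huv : IsPFSS q u v)
    (hGf : ∀ x, Integrable fun t => GreenFn u v x t * f t) :
    IsPrimitive (greenCoeffV u f) fun t => -(u t * f t) := fun a b => by
  rw [intervalIntegral.integral_neg, ← integral_Ioi_sub_Ioi' (huv.integrableOn_u_mul_Ioi hGf a)
    (huv.integrableOn_u_mul_Ioi hGf b), greenCoeffV, greenCoeffV]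
  ring

lemma continuous_greenCoeffU (huv : IsPFSS q u v) (hf : LocallyIntegrable f)
    (hGf : ∀ x, Integrable fun t => GreenFn u v x t * f t) : Continuous (greenCoeffU v f) :=
  (huv.isPrimitive_greenCoeffU hGf).continuous (hf.continuous_mul huv.contDiff_v.continuous)

lemma continuous_greenCoeffV (huv : IsPFSS q u v) (hf : LocallyIntegrable f)
    (hGf : ∀ x, Integrable fun t => GreenFn u v x t * f t) : Continuous (greenCoeffV u f) :=
  (huv.isPrimitive_greenCoeffV hGf).continuous (hf.continuous_mul huv.contDiff_u.continuous).neg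

lemma hasDerivAt_greenOp (huv : IsPFSS q u v) (hf : LocallyIntegrable f)
    (hGf : ∀ x, Integrable fun t => GreenFn u v x t * f t) (x : ℝ) :
    HasDerivAt (GreenOp u v f)
      (deriv u x * greenCoeffU v f x + deriv v x * greenCoeffV u f x) x := by
  have hu := huv.contDiff_u
  have hv := huv.contDiff_v
  have hu' := hu.continuous_deriv le_rfl
  have hv' := hv.continuous_deriv le_rfl
  have hA := hu'.mul (huv.continuous_greenCoeffU hf hGf)
  have hB := hv'.mul (huv.continuous_greenCoeffV hf hGf)
  have h := ((isPrimitive_deriv hu).mul (huv.isPrimitive_greenCoeffU hGf) hu'.locallyIntegrable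
    (hf.continuous_mul hv.continuous)).add
    ((isPrimitive_deriv hv).mul (huv.isPrimitive_greenCoeffV hGf) hv'.locallyIntegrable
      (hf.continuous_mul hu.continuous).neg)
    (((hf.continuous_mul hv.continuous).continuous_mul hu.continuous).add hA.locallyIntegrable)
    (((hf.continuous_mul hu.continuous).neg.continuous_mul hv.continuous).add hB.locallyIntegrable)
  rw [← funext (greenOp_eq hGf)] at h
  exact (h.congr (g := fun t => deriv u t * greenCoeffU v f t + deriv v t * greenCoeffV u f t)
    fun t => by ring).hasDerivAt (hA.add hB) x

lemma contDiff_greenOp (huv : IsPFSS q u v) (hf : LocallyIntegrable f)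
    (hGf : ∀ x, Integrable fun t => GreenFn u v x t * f t) : ContDiff ℝ 1 (GreenOp u v f) := by
  refine contDiff_one_iff_deriv.mpr
    ⟨fun x => (huv.hasDerivAt_greenOp hf hGf x).differentiableAt, ?_⟩
  rw [funext fun x => (huv.hasDerivAt_greenOp hf hGf x).deriv]
  exact ((huv.contDiff_u.continuous_deriv le_rfl).mul (huv.continuous_greenCoeffU hf hGf)).add
    ((huv.contDiff_v.continuous_deriv le_rfl).mul (huv.continuous_greenCoeffV hf hGf))

lemma isPrimitive_deriv_greenOp (hq_loc : LocallyIntegrable q) (huv : IsPFSS q u v)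
    (hf : LocallyIntegrable f) (hGf : ∀ x, Integrable fun t => GreenFn u v x t * f t) :
    IsPrimitive (deriv (GreenOp u v f)) fun t => q t * GreenOp u v f t - f t := by
  have hu := huv.contDiff_u.continuous
  have hv := huv.contDiff_v.continuous
  have hA := huv.continuous_greenCoeffU hf hGf
  have hB := huv.continuous_greenCoeffV hf hGf
  have h := (huv.isPrimitive_deriv_u.mul (huv.isPrimitive_greenCoeffU hGf)
    (hq_loc.mul_continuous hu) (hf.continuous_mul hv)).add
    (huv.isPrimitive_deriv_v.mul (huv.isPrimitive_greenCoeffV hGf)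
      (hq_loc.mul_continuous hv) (hf.continuous_mul hu).neg)
    (((hf.continuous_mul hv).continuous_mul (huv.contDiff_u.continuous_deriv le_rfl)).add
      ((hq_loc.mul_continuous hu).mul_continuous hA))
    (((hf.continuous_mul hu).neg.continuous_mul (huv.contDiff_v.continuous_deriv le_rfl)).add
      ((hq_loc.mul_continuous hv).mul_continuous hB))
  rw [funext fun x => (huv.hasDerivAt_greenOp hf hGf x).deriv]
  refine h.congr fun t => ?_
  rw [greenOp_eq hGf]
  linear_combination (-f t) * huv.wronskian t

lemma exists_eq_combination (hq_loc : LocallyIntegrable q) (huv : IsPFSS q u v)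
    (hw : ContDiff ℝ 1 w) (hw' : IsPrimitive (deriv w) fun t => q t * w t) :
    ∃ a b : ℝ, ∀ x, w x = a * u x + b * v x := by
  refine ⟨deriv v 0 * w 0 - v 0 * deriv w 0, -(deriv u 0 * w 0 - u 0 * deriv w 0), fun x => ?_⟩
  rw [← wronskian_eq hq_loc huv.contDiff_v huv.isPrimitive_deriv_v hw hw' 0 x,
    ← wronskian_eq hq_loc huv.contDiff_u huv.isPrimitive_deriv_u hw hw' 0 x]
  linear_combination (-w x) * huv.wronskian x

lemma eq_zero_of_bounded (hq_loc : LocallyIntegrable q) (huv : IsPFSS q u v)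
    (hw : ContDiff ℝ 1 w) (hw' : IsPrimitive (deriv w) fun t => q t * w t)
    (hbdd : ∃ M, ∀ x, |w x| ≤ M) : w = 0 := by
  obtain ⟨a, b, hab⟩ := huv.exists_eq_combination hq_loc hw hw'
  obtain ⟨M, hM⟩ := hbdd
  have hdiv {l : Filter ℝ} {g : ℝ → ℝ} (hg : Tendsto g l atTop) :
      Tendsto (fun x => w x / g x) l (𝓝 0) :=
    tendsto_bdd_div_atTop_nhds_zero (.of_forall fun x => neg_le_of_abs_le (hM x))
      (.of_forall fun x => le_of_abs_le (hM x)) hg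
  have hb : b = 0 := by
    have h : Tendsto (fun x => w x / v x) atTop (𝓝 (a * 0 + b)) :=
      (((huv.tendsto_u_atTop.div_atTop huv.tendsto_v_atTop).const_mul a).add_const b).congr
        fun x => by rw [hab x]; field_simp [(huv.v_pos x).ne']
    simpa using tendsto_nhds_unique h (hdiv huv.tendsto_v_atTop)
  have ha : a = 0 := by
    have h : Tendsto (fun x => w x / u x) atBot (𝓝 a) :=
      tendsto_const_nhds.congr fun x => by
        rw [hab x, hb, zero_mul, add_zero, mul_div_cancel_right₀ _ (huv.u_pos x).ne']
    exact tendsto_nhds_unique h (hdiv huv.tendsto_u_atBot)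
  funext x
  simp [hab x, ha, hb]

end IsPFSS

theorem corollary_3_3_1 (q u v : ℝ → ℝ) (hq_loc : LocallyIntegrable q) (hq : ∀ x, 1 ≤ q x)
    (huv : IsPFSS q u v) (p : ℝ≥0∞) (hp : 1 ≤ p) (f : ℝ → ℝ) (hf : MemLp f p) :
    ContDiff ℝ 1 (GreenOp u v f) ∧
    (∃ M : ℝ, ∀ x, |GreenOp u v f x| ≤ M) ∧
    (∀ a b : ℝ, deriv (GreenOp u v f) b - deriv (GreenOp u v f) a
        = ∫ t in a..b, (q t * GreenOp u v f t - f t)) ∧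
    (∀ z : ℝ → ℝ, ContDiff ℝ 1 z → (∃ M : ℝ, ∀ x, |z x| ≤ M) →
      (∀ a b : ℝ, deriv z b - deriv z a = ∫ t in a..b, (q t * z t - f t)) →
      z = GreenOp u v f) := by
  have hGf x := huv.integrable_greenFn_mul_and_abs_greenOp_le hq_loc hq hp hf x
  have hfloc := hf.locallyIntegrable hp
  have hC1 := huv.contDiff_greenOp hfloc fun x => (hGf x).1
  have hsol := huv.isPrimitive_deriv_greenOp hq_loc hfloc fun x => (hGf x).1
  refine ⟨hC1, ⟨_, fun x => (hGf x).2⟩, hsol, fun z hz ⟨M, hM⟩ hz_sol => ?_⟩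
  refine sub_eq_zero.mp (huv.eq_zero_of_bounded hq_loc (hz.sub hC1)
    (isPrimitive_deriv_sub hq_loc hfloc hz hC1 hz_sol hsol) ⟨M + (eLpNorm f p).toReal, ?_⟩)
  exact fun x => (abs_sub _ _).trans (add_le_add (hM x) (hGf x).2)
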